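/- The Black-Scholes call and put price functions satisfy the Black-Scholes partial differential equation: for all S, K, θ, σ > 0, ∂c_BS/∂θ (S,K,θ,σ) = (1/2)·σ²·S²·∂²c_BS/∂S² (S,K,θ,σ), and the same identity holds with c_BS replaced by p_BS. -/

import Mathlib

open MeasureTheory Real Filter

/-- The standard normal density. -/
noncomputable def stdNormalPDF (x : ℝ) : ℝ :=
  (Real.sqrt (2 * Real.pi))⁻¹ * Real.exp (-(x ^ 2) / 2)

/-- The standard normal cumulative distribution function. -/
noncomputable def stdNormalCDF (x : ℝ) : ℝ :=
  ∫ t in Set.Iic x, stdNormalPDF t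

/-- `d₁ = log(S/K)/(σ√θ) + σ√θ/2`. -/
noncomputable def d1 (S K θ σ : ℝ) : ℝ :=
  Real.log (S / K) / (σ * Real.sqrt θ) + σ * Real.sqrt θ / 2

/-- `d₂ = d₁ − σ√θ`. -/
noncomputable def d2 (S K θ σ : ℝ) : ℝ :=
  d1 S K θ σ - σ * Real.sqrt θ

/-- Black-Scholes call price `c_BS(S,K,θ,σ) = S·Φ(d₁) − K·Φ(d₂)`. -/
noncomputable def cBS (S K θ σ : ℝ) : ℝ :=
  S * stdNormalCDF (d1 S K θ σ) - K * stdNormalCDF (d2 S K θ σ)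

/-- Black-Scholes put price `p_BS(S,K,θ,σ) = K·Φ(−d₂) − S·Φ(−d₁)`. -/
noncomputable def pBS (S K θ σ : ℝ) : ℝ :=
  K * stdNormalCDF (-(d2 S K θ σ)) - S * stdNormalCDF (-(d1 S K θ σ))

/-!
Everything rests on the identity `S φ(d₁) = K φ(d₂)`, which holds because
`d₁² - d₂² = 2 log(S/K)`. Differentiating `g Φ(u) - K Φ(u - v)` where `g φ(u) = K φ(u - v)`,
the terms coming from `u'` cancel and only `g' Φ(u) + g φ(u) v'` survives. Taking `g(S) = S`
and `v` constant gives `∂c/∂S = Φ(d₁)`, hence `∂²c/∂S² = φ(d₁)/(Sσ√θ)`; taking `g` constant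
and `v(θ) = σ√θ` gives `∂c/∂θ = Sφ(d₁)σ/(2√θ)`, and the two agree up to the factor `σ²S²/2`.
Put-call parity `p = c + K - S` transfers the equation to the put.
-/

open Topology ProbabilityTheory

theorem hasDerivAt_integral_Iic {f : ℝ → ℝ} (hf : Integrable f) (hc : Continuous f) (x : ℝ) :
    HasDerivAt (fun y => ∫ t in Set.Iic y, f t) (f x) x := by
  have split : (fun y => ∫ t in Set.Iic y, f t)
      = fun y => (∫ t in Set.Iic 0, f t) + ∫ t in (0 : ℝ)..y, f t := by
    funext y
    rw [← intervalIntegral.integral_Iic_sub_Iic hf.integrableOn hf.integrableOn]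
    ring
  rw [split]
  exact (intervalIntegral.integral_hasDerivAt_right hf.intervalIntegrable
    (hc.stronglyMeasurableAtFilter _ _) hc.continuousAt).const_add _

theorem stdNormalPDF_eq_gaussianPDFReal : stdNormalPDF = gaussianPDFReal 0 1 := by
  funext x
  simp [stdNormalPDF, gaussianPDFReal]

theorem integrable_stdNormalPDF : Integrable stdNormalPDF := by
  rw [stdNormalPDF_eq_gaussianPDFReal]
  exact integrable_gaussianPDFReal 0 1

theorem integral_stdNormalPDF : ∫ x, stdNormalPDF x = 1 := by
  rw [stdNormalPDF_eq_gaussianPDFReal]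
  exact integral_gaussianPDFReal_eq_one 0 one_ne_zero

theorem continuous_stdNormalPDF : Continuous stdNormalPDF := by
  unfold stdNormalPDF
  fun_prop

theorem stdNormalPDF_neg (x : ℝ) : stdNormalPDF (-x) = stdNormalPDF x := by
  simp [stdNormalPDF]

theorem hasDerivAt_stdNormalCDF (x : ℝ) : HasDerivAt stdNormalCDF (stdNormalPDF x) x :=
  hasDerivAt_integral_Iic integrable_stdNormalPDF continuous_stdNormalPDF x

theorem stdNormalCDF_neg (x : ℝ) : stdNormalCDF (-x) = 1 - stdNormalCDF x := by
  have tail : stdNormalCDF (-x) = ∫ t in Set.Ioi x, stdNormalPDF t := by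
    have even : ∫ t in Set.Iic (-x), stdNormalPDF t = ∫ t in Set.Iic (-x), stdNormalPDF (-t) := by
      simp_rw [stdNormalPDF_neg]
    rw [stdNormalCDF, even, integral_comp_neg_Iic, neg_neg]
  have total := intervalIntegral.integral_Iic_add_Ioi (b := x)
    integrable_stdNormalPDF.integrableOn integrable_stdNormalPDF.integrableOn
  rw [integral_stdNormalPDF] at total
  rw [tail, stdNormalCDF]
  linarith

theorem mul_stdNormalPDF_d1 {S K θ σ : ℝ} (hS : 0 < S) (hK : 0 < K) (hσθ : σ * √θ ≠ 0) :
    S * stdNormalPDF (d1 S K θ σ) = K * stdNormalPDF (d2 S K θ σ) := by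
  have exponents : log S - d1 S K θ σ ^ 2 / 2 = log K - d2 S K θ σ ^ 2 / 2 := by
    simp only [d2, d1, log_div hS.ne' hK.ne']
    generalize σ * √θ = a at hσθ ⊢
    field_simp
    ring
  calc S * stdNormalPDF (d1 S K θ σ)
      = (√(2 * π))⁻¹ * exp (log S - d1 S K θ σ ^ 2 / 2) := by
        rw [exp_sub, exp_log hS, stdNormalPDF, neg_div, exp_neg]; field_simp
    _ = K * stdNormalPDF (d2 S K θ σ) := by
        rw [exponents, exp_sub, exp_log hK, stdNormalPDF, neg_div, exp_neg]; field_simp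

theorem hasDerivAt_mul_stdNormalCDF_sub {g u v : ℝ → ℝ} {g' u' v' K x : ℝ}
    (hg : HasDerivAt g g' x) (hu : HasDerivAt u u' x) (hv : HasDerivAt v v' x)
    (hφ : g x * stdNormalPDF (u x) = K * stdNormalPDF (u x - v x)) :
    HasDerivAt (fun y => g y * stdNormalCDF (u y) - K * stdNormalCDF (u y - v y))
      (g' * stdNormalCDF (u x) + g x * stdNormalPDF (u x) * v') x := by
  have h := (hg.mul ((hasDerivAt_stdNormalCDF _).comp x hu)).sub
    (((hasDerivAt_stdNormalCDF _).comp x (hu.sub hv)).const_mul K)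
  refine h.congr_deriv ?_
  simp only [Function.comp_apply, Pi.sub_apply]
  linear_combination (u' - v') * hφ

theorem hasDerivAt_d1_spot (K θ σ : ℝ) {s : ℝ} (hs : s ≠ 0) (hK : K ≠ 0) :
    HasDerivAt (fun s => d1 s K θ σ) (1 / (s * (σ * √θ))) s := by
  have h := (((hasDerivAt_id s).div_const K).log (div_ne_zero hs hK)).div_const (σ * √θ)
  refine (h.add_const (σ * √θ / 2)).congr_deriv ?_
  simp only [id]
  field_simp

theorem differentiableAt_d1_maturity (S K : ℝ) {θ σ : ℝ} (hθ : 0 < θ) (hσ : σ ≠ 0) :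
    DifferentiableAt ℝ (fun t => d1 S K t σ) θ := by
  have hsqrt : DifferentiableAt ℝ (fun t => σ * √t) θ :=
    (Real.hasDerivAt_sqrt hθ.ne').differentiableAt.const_mul σ
  exact ((differentiableAt_const _).div hsqrt (by positivity)).add (hsqrt.div_const 2)

theorem hasDerivAt_cBS_spot {s K θ σ : ℝ} (hs : 0 < s) (hK : 0 < K) (hσθ : σ * √θ ≠ 0) :
    HasDerivAt (fun s => cBS s K θ σ) (stdNormalCDF (d1 s K θ σ)) s := by
  have h := hasDerivAt_mul_stdNormalCDF_sub (hasDerivAt_id s)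
    (hasDerivAt_d1_spot K θ σ hs.ne' hK.ne') (hasDerivAt_const s (σ * √θ))
    (mul_stdNormalPDF_d1 hs hK hσθ)
  exact h.congr_deriv (by simp)

theorem deriv_deriv_cBS_spot {S K θ σ : ℝ} (hS : 0 < S) (hK : 0 < K) (hσθ : σ * √θ ≠ 0) :
    deriv (deriv fun s => cBS s K θ σ) S = stdNormalPDF (d1 S K θ σ) / (S * (σ * √θ)) := by
  have delta : deriv (fun s => cBS s K θ σ) =ᶠ[𝓝 S] fun s => stdNormalCDF (d1 s K θ σ) := by
    filter_upwards [eventually_gt_nhds hS] with s hs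
    exact (hasDerivAt_cBS_spot hs hK hσθ).deriv
  rw [delta.deriv_eq, ← mul_one_div]
  exact ((hasDerivAt_stdNormalCDF _).comp S (hasDerivAt_d1_spot K θ σ hS.ne' hK.ne')).deriv

theorem hasDerivAt_cBS_maturity {S K θ σ : ℝ} (hS : 0 < S) (hK : 0 < K) (hθ : 0 < θ)
    (hσ : σ ≠ 0) :
    HasDerivAt (fun t => cBS S K t σ) (S * stdNormalPDF (d1 S K θ σ) * σ / (2 * √θ)) θ := by
  have h := hasDerivAt_mul_stdNormalCDF_sub (hasDerivAt_const θ S)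
    (differentiableAt_d1_maturity S K hθ hσ).hasDerivAt
    ((Real.hasDerivAt_sqrt hθ.ne').const_mul σ)
    (mul_stdNormalPDF_d1 hS hK (by positivity))
  exact h.congr_deriv (by simp only [zero_mul, one_div, mul_inv_rev, zero_add]; ring)

theorem pBS_eq_cBS_add_sub (S K θ σ : ℝ) : pBS S K θ σ = cBS S K θ σ + K - S := by
  simp only [pBS, cBS, stdNormalCDF_neg]
  ring

theorem deriv_pBS_maturity (S K θ σ : ℝ) :
    deriv (fun t => pBS S K t σ) θ = deriv (fun t => cBS S K t σ) θ := by
  simp only [pBS_eq_cBS_add_sub, deriv_sub_const, deriv_add_const]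

theorem deriv_deriv_pBS_spot {S K θ σ : ℝ} (hS : 0 < S) (hK : 0 < K) (hσθ : σ * √θ ≠ 0) :
    deriv (deriv fun s => pBS s K θ σ) S = deriv (deriv fun s => cBS s K θ σ) S := by
  have delta :
      deriv (fun s => pBS s K θ σ) =ᶠ[𝓝 S] fun s => deriv (fun s => cBS s K θ σ) s - 1 := by
    filter_upwards [eventually_gt_nhds hS] with s hs
    have hc := hasDerivAt_cBS_spot hs hK hσθ
    simp only [pBS_eq_cBS_add_sub]
    rw [hc.deriv]
    exact ((hc.add_const K).sub (hasDerivAt_id' s)).deriv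
  rw [delta.deriv_eq, deriv_sub_const]

/-- The Black-Scholes call and put price functions satisfy the Black-Scholes PDE:
for all `S, K, θ, σ > 0`, `∂c_BS/∂θ = (1/2)·σ²·S²·∂²c_BS/∂S²`, and likewise for
`p_BS`. -/
theorem blackScholes_pde
    (S K θ σ : ℝ) (hS : 0 < S) (hK : 0 < K) (hθ : 0 < θ) (hσ : 0 < σ) :
    deriv (fun t => cBS S K t σ) θ
        = (1/2) * σ ^ 2 * S ^ 2 * deriv (fun s => deriv (fun s' => cBS s' K θ σ) s) S
      ∧ deriv (fun t => pBS S K t σ) θ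
        = (1/2) * σ ^ 2 * S ^ 2
            * deriv (fun s => deriv (fun s' => pBS s' K θ σ) s) S := by
  have hσθ : σ * √θ ≠ 0 := by positivity
  have call : deriv (fun t => cBS S K t σ) θ
      = (1/2) * σ ^ 2 * S ^ 2 * deriv (deriv fun s => cBS s K θ σ) S := by
    rw [(hasDerivAt_cBS_maturity hS hK hθ hσ.ne').deriv, deriv_deriv_cBS_spot hS hK hσθ]
    field_simp
  refine ⟨call, ?_⟩
  rw [deriv_pBS_maturity, deriv_deriv_pBS_spot hS hK hσθ]
  exact call
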